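/- Let R = F_p[ζ_2, ζ_3, …] ⊗ Λ(τ̄_3, τ̄_4, …) ⊆ B₂ and, for k ≥ 0, let W_2(k) ⊆ R be the span of the monomials of R of weight exactly p²k; W_2(k) is stable under Q_0 and Q_1. Write k = a_0 + a_1 p + a_2 p² + ⋯ for the base-p expansion of k. Then M_*(W_2(k); Q_0) is the one-dimensional F_p-vector space spanned by the class of ζ_2^k, and M_*(W_2(k); Q_1) is the one-dimensional F_p-vector space spanned by the class of ζ_2^{a_0} ζ_3^{a_1} ζ_4^{a_2} ⋯. -/

import Mathlib

/-- A monomial of `B n = F_p[ζ₁, ζ₂, …] ⊗ Λ(τ̄_{n+1}, τ̄_{n+2}, …)`: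
`e k` is the exponent of `ζ_k` (with `e 0 = 0`, i.e. no `ζ₀`), and
`t` is the set of indices `m` of the exterior generators `τ̄_m` occurring
(all of which satisfy `m ≥ n + 1`). -/
structure Mono (n : ℕ) where
  e : ℕ →₀ ℕ
  t : Finset ℕ
  he : e 0 = 0
  ht : ∀ m ∈ t, n + 1 ≤ m

/-- `B p n` models `A//E(n)_* = F_p[ζ₁, ζ₂, …] ⊗ Λ(τ̄_{n+1}, …)` as the free
`F_p`-vector space on its monomial basis. -/
abbrev B (p n : ℕ) : Type := Mono n →₀ ZMod p

namespace Mono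

variable {n : ℕ}

/-- Internal (topological) degree of a monomial: `deg ζ_k = 2(p^k − 1)`,
`deg τ̄_m = 2p^m − 1`. -/
def deg (p : ℕ) (x : Mono n) : ℕ :=
  x.e.sum (fun k a => a * (2 * (p ^ k - 1))) + ∑ m ∈ x.t, (2 * p ^ m - 1)

/-- Weight of a monomial: `wt ζ_k = wt τ̄_k = p^k`, extended additively. -/
def wt (p : ℕ) (x : Mono n) : ℕ :=
  x.e.sum (fun k a => a * p ^ k) + ∑ m ∈ x.t, p ^ m

/-- Length of a monomial: the number of exterior factors `τ̄_m` occurring in it. -/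
def len (x : Mono n) : ℕ := x.t.card

end Mono

/-- The monomial obtained from `x` by the Milnor operation `Q_r` acting on the
exterior factor `τ̄_m`: remove `τ̄_m` and multiply by `ζ_{m−r}^{p^r}`
(with the convention `ζ₀ = 1`, i.e. if `m ≤ r` nothing is added). -/
noncomputable def Qtarget (p r : ℕ) {n : ℕ} (x : Mono n) (m : ℕ) : Mono n where
  e := if r < m then x.e + Finsupp.single (m - r) (p ^ r) else x.e
  t := x.t.erase m
  he := by
    by_cases h : r < m
    · simp [if_pos h, Finsupp.single_apply, x.he, Nat.sub_ne_zero_of_lt h]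
    · simp [if_neg h, x.he]
  ht := fun m' hm' => x.ht m' (Finset.mem_of_mem_erase hm')

/-- Value of the Milnor operation `Q_r` on a basis monomial: the signed sum over the
exterior factors `τ̄_m` of `x`, the sign being the Koszul sign `(−1)^{#{m' ∈ t, m' < m}}`. -/
noncomputable def Qmono (p r : ℕ) {n : ℕ} (x : Mono n) : B p n :=
  ∑ m ∈ x.t, ((-1 : ZMod p) ^ ((x.t.filter (fun m' => m' < m)).card)) •
    Finsupp.single (Qtarget p r x m) (1 : ZMod p)

/-- The Milnor operation `Q_r : B_n → B_n`, the unique graded derivation with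
`Q_r ζ_k = 0` and `Q_r τ̄_m = ζ_{m−r}^{p^r}`. -/
noncomputable def Qop (p n r : ℕ) : B p n →ₗ[ZMod p] B p n :=
  Finsupp.lsum (ZMod p) fun x => LinearMap.toSpanSingleton (ZMod p) (B p n) (Qmono p r x)

/-- The span of the set of monomials satisfying a predicate `P`. -/
noncomputable def monSpan (p n : ℕ) (P : Mono n → Prop) : Submodule (ZMod p) (B p n) :=
  Submodule.span (ZMod p) ((fun x => Finsupp.single x (1 : ZMod p)) '' {x | P x})

/-- `W₂(k) ⊆ R ⊆ B₂`: the span of the monomials of `R` (no `ζ₁`-factor) of weight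
exactly `p²k`. -/
noncomputable def Wsub (p k : ℕ) : Submodule (ZMod p) (B p 2) :=
  monSpan p 2 (fun x => x.e 1 = 0 ∧ x.wt p = p ^ 2 * k)

/-- The monomial `ζ₂^k` of `B₂`. -/
noncomputable def zeta2pow (k : ℕ) : Mono 2 where
  e := Finsupp.single 2 k
  t := ∅
  he := by simp
  ht := fun m hm => absurd hm (Finset.notMem_empty m)

/-!
Fix `r ≤ n` and call a slot `m ≥ n + 1` of a monomial active if `τ̄_m` occurs in it or
`ζ_{m-r}^{p^r}` divides it. Trading `ζ_{m₀-r}^{p^r}` for `τ̄_{m₀}` (with the Koszul sign) at the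
largest active slot `m₀`, or sending the monomial to `0` if `τ̄_{m₀}` already occurs, defines a map
`h` with `Q_r h + h Q_r = 1 - π`, where `π` projects onto the monomials without active slots. Hence
on a span of monomials closed under these trades, the `Q_r`-homology is spanned by its monomials
without active slots, none of which is a boundary. Trades preserve the weight and the exponent of
`ζ₁`, so `W₂(k)` is such a span, and it contains exactly one monomial without active slots: for
`r = 0` all of the weight sits on `ζ₂`, and for `r = 1` all exponents are `< p`, so they are the
base-`p` digits of `k`.
-/

theorem Mono.ext {n : ℕ} {x y : Mono n} (he : x.e = y.e) (ht : x.t = y.t) : x = y := by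
  cases x; cases y; simp_all

def Mono.ofExp {n : ℕ} (e : ℕ →₀ ℕ) (h0 : e 0 = 0) : Mono n :=
  ⟨e, ∅, h0, fun m hm => absurd hm (Finset.notMem_empty m)⟩

namespace Margolis

open Finset
open Finsupp (single linearCombination)

variable {p n r : ℕ}

section Digits

theorem sum_range_div_pow_mod_mul_pow (p N L : ℕ) :
    ∑ i ∈ range L, N / p ^ i % p * p ^ i = N % p ^ L := by
  induction L with
  | zero => simp [Nat.mod_one]
  | succ L ih => rw [sum_range_succ, ih, Nat.mod_pow_succ, mul_comm]

theorem sum_range_mul_pow_div_pow_mod {g : ℕ → ℕ} (hg : ∀ i, g i < p) {L : ℕ}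
    (hL : ∀ i, L ≤ i → g i = 0) (j : ℕ) : (∑ i ∈ range L, g i * p ^ i) / p ^ j % p = g j := by
  induction L generalizing g j with
  | zero => simp [hL j (Nat.zero_le j)]
  | succ L ih =>
    have hp : 0 < p := (Nat.zero_le _).trans_lt (hg 0)
    have hsum : ∑ i ∈ range (L + 1), g i * p ^ i = g 0 + p * ∑ i ∈ range L, g (i + 1) * p ^ i := by
      rw [sum_range_succ', mul_sum, pow_zero, mul_one, add_comm]
      exact congrArg _ (sum_congr rfl fun i _ => by ring)
    cases j with
    | zero => rw [pow_zero, Nat.div_one, hsum, Nat.add_mul_mod_self_left, Nat.mod_eq_of_lt (hg 0)]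
    | succ j =>
      rw [hsum, pow_succ', ← Nat.div_div_eq_div_mul, Nat.add_mul_div_left _ _ hp,
        Nat.div_eq_of_lt (hg 0), zero_add]
      exact ih (fun i => hg _) (fun i hi => hL _ (by omega)) j

theorem linearCombination_pow_eq_sum_range {f : ℕ →₀ ℕ} {L : ℕ} (hL : ∀ i, L ≤ i → f i = 0) :
    linearCombination ℕ (p ^ ·) f = ∑ i ∈ range L, f i * p ^ i := by
  have hsupp : f.support ⊆ range L := fun i hi =>
    mem_range.2 (not_le.1 fun h => Finsupp.mem_support_iff.1 hi (hL i h))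
  exact Finsupp.sum_of_support_subset f hsupp (fun i a => a * p ^ i) fun _ _ => zero_mul _

theorem linearCombination_pow_div_pow_mod {f : ℕ →₀ ℕ} (hf : ∀ i, f i < p) (j : ℕ) :
    linearCombination ℕ (p ^ ·) f / p ^ j % p = f j := by
  have hL : ∀ i, f.support.sup id + 1 ≤ i → f i = 0 := fun i hi => by
    by_contra h
    have := le_sup (f := id) (Finsupp.mem_support_iff.2 h)
    simp only [id] at this
    omega
  rw [linearCombination_pow_eq_sum_range hL, sum_range_mul_pow_div_pow_mod hf hL]

theorem eq_of_linearCombination_pow_eq {f g : ℕ →₀ ℕ} (hf : ∀ i, f i < p) (hg : ∀ i, g i < p)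
    (h : linearCombination ℕ (p ^ ·) f = linearCombination ℕ (p ^ ·) g) : f = g :=
  Finsupp.ext fun j => by
    rw [← linearCombination_pow_div_pow_mod hf j, h, linearCombination_pow_div_pow_mod hg j]

end Digits

section Slots

def activeSlots (p r : ℕ) (x : Mono n) : Finset ℕ :=
  x.t ∪ {m ∈ x.e.support.image (· + r) | n + 1 ≤ m ∧ p ^ r ≤ x.e (m - r)}

theorem t_subset_activeSlots (x : Mono n) : x.t ⊆ activeSlots p r x :=
  subset_union_left

theorem le_of_mem_activeSlots {x : Mono n} {m : ℕ} (h : m ∈ activeSlots p r x) : n + 1 ≤ m := by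
  rcases mem_union.1 h with h | h
  · exact x.ht m h
  · exact (mem_filter.1 h).2.1

theorem mem_activeSlots (hp : 0 < p) {x : Mono n} {m : ℕ} :
    m ∈ activeSlots p r x ↔ m ∈ x.t ∨ n + 1 ≤ m ∧ p ^ r ≤ x.e (m - r) := by
  simp only [activeSlots, mem_union, mem_filter, mem_image, Finsupp.mem_support_iff]
  refine or_congr_right ⟨fun h => h.2, fun h => ⟨⟨m - r, ?_⟩, h⟩⟩
  have hpr : 0 < p ^ r := Nat.pow_pos hp
  have hm : m - r ≠ 0 := fun h0 => by have := h.2; rw [h0, x.he] at this; omega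
  exact ⟨by omega, by omega⟩

theorem activeSlots_eq_empty_iff (hp : 0 < p) {x : Mono n} :
    activeSlots p r x = ∅ ↔ x.t = ∅ ∧ ∀ m, n + 1 ≤ m → x.e (m - r) < p ^ r := by
  simp only [eq_empty_iff_forall_notMem, mem_activeSlots hp, not_or, not_and, not_le]
  exact ⟨fun h => ⟨fun m => (h m).1, fun m => (h m).2⟩, fun h m => ⟨h.1 m, h.2 m⟩⟩

theorem Qtarget_e (hm : r < m) (x : Mono n) :
    (Qtarget p r x m).e = x.e + single (m - r) (p ^ r) :=
  if_pos hm

theorem Qtarget_t (x : Mono n) (m : ℕ) : (Qtarget p r x m).t = x.t.erase m := rfl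

noncomputable def Qsource (p r : ℕ) (x : Mono n) (m : ℕ) (hm : n + 1 ≤ m) : Mono n where
  e := x.e - single (m - r) (p ^ r)
  t := insert m x.t
  he := by simp [x.he]
  ht m' hm' := (mem_insert.1 hm').elim (fun h => h ▸ hm) (x.ht m')

theorem Qtarget_Qsource (hr : r ≤ n) {x : Mono n} {m : ℕ} (hm : n + 1 ≤ m) (hmt : m ∉ x.t)
    (hN : p ^ r ≤ x.e (m - r)) : Qtarget p r (Qsource p r x m hm) m = x := by
  refine Mono.ext ?_ (erase_insert hmt)
  rw [Qtarget_e (by omega)]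
  ext j
  simp only [Qsource, Finsupp.add_apply, Finsupp.tsub_apply, Finsupp.single_apply]
  split_ifs with h
  · subst h; omega
  · omega

theorem Qsource_Qtarget (hr : r ≤ n) {x : Mono n} {m : ℕ} (hm : m ∈ x.t) :
    Qsource p r (Qtarget p r x m) m (x.ht m hm) = x := by
  refine Mono.ext ?_ (insert_erase hm)
  have := x.ht m hm
  simp only [Qsource, Qtarget_e (show r < m by omega), add_tsub_cancel_right]

theorem Qtarget_Qsource_comm (hr : r ≤ n) {x : Mono n} {m m' : ℕ} (hm : n + 1 ≤ m)
    (hm' : m' ∈ x.t) (hne : m' ≠ m) :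
    Qtarget p r (Qsource p r x m hm) m' = Qsource p r (Qtarget p r x m') m hm := by
  have := x.ht m' hm'
  refine Mono.ext ?_ (erase_insert_of_ne hne.symm)
  simp only [Qsource, Qtarget_e (show r < m' by omega)]
  ext j
  simp only [Finsupp.add_apply, Finsupp.tsub_apply, Finsupp.single_apply]
  split_ifs <;> omega

theorem activeSlots_Qtarget (hp : 0 < p) (hr : r ≤ n) {x : Mono n} {m : ℕ} (hm : m ∈ x.t) :
    activeSlots p r (Qtarget p r x m) = activeSlots p r x := by
  have := x.ht m hm
  ext m'
  rw [mem_activeSlots hp, mem_activeSlots hp, Qtarget_t, Qtarget_e (by omega), mem_erase,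
    Finsupp.add_apply, Finsupp.single_apply]
  by_cases h : m' = m
  · subst h
    simp [hm, this]
  · have : m - r ≠ m' - r := by omega
    simp [h, this]

end Slots

section Homotopy

noncomputable def homotopyMono (p r : ℕ) (x : Mono n) : B p n :=
  if h : (activeSlots p r x).Nonempty then
    if (activeSlots p r x).max' h ∈ x.t then 0
    else (-1 : ZMod p) ^ #x.t •
      single (Qsource p r x _ (le_of_mem_activeSlots (max'_mem _ h))) 1
  else 0

noncomputable def homotopy (p n r : ℕ) : B p n →ₗ[ZMod p] B p n :=
  linearCombination (ZMod p) (homotopyMono p r)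

noncomputable def reducedPart (p n r : ℕ) : B p n →ₗ[ZMod p] B p n :=
  linearCombination (ZMod p) fun x => if activeSlots p r x = ∅ then single x 1 else 0

theorem Qop_single (x : Mono n) (c : ZMod p) : Qop p n r (single x c) = c • Qmono p r x := by
  rw [Qop, Finsupp.lsum_single, LinearMap.toSpanSingleton_apply]

theorem homotopyMono_of_isGreatest {x : Mono n} {m : ℕ}
    (h : IsGreatest (activeSlots p r x : Set ℕ) m) :
    homotopyMono p r x = if m ∈ x.t then 0 else
      (-1 : ZMod p) ^ #x.t • single (Qsource p r x m (le_of_mem_activeSlots h.1)) 1 := by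
  have hne : (activeSlots p r x).Nonempty := ⟨m, h.1⟩
  obtain rfl : (activeSlots p r x).max' hne = m := (isGreatest_max' _ hne).unique h
  rw [homotopyMono, dif_pos hne]

theorem homotopy_Qmono (x : Mono n) :
    homotopy p n r (Qmono p r x) =
      ∑ m ∈ x.t, (-1 : ZMod p) ^ #{m' ∈ x.t | m' < m} • homotopyMono p r (Qtarget p r x m) := by
  simp only [Qmono, map_sum, map_smul, homotopy, Finsupp.linearCombination_single, one_smul]

theorem neg_one_pow_mul_self {R : Type*} [Monoid R] [HasDistribNeg R] (a : ℕ) :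
    (-1 : R) ^ a * (-1) ^ a = 1 := by
  rw [← pow_add, ← two_mul, pow_mul, neg_one_sq, one_pow]

/-- Only the term of `Q_r x` that lowers `τ̄_{m₀}` survives `h`. -/
theorem homotopy_Qmono_of_isGreatest_of_mem (hp : 0 < p) (hr : r ≤ n) {x : Mono n} {m₀ : ℕ}
    (hg : IsGreatest (activeSlots p r x : Set ℕ) m₀) (hm₀ : m₀ ∈ x.t) :
    homotopy p n r (Qmono p r x) = single x 1 := by
  have hg' : ∀ {m}, m ∈ x.t → IsGreatest (activeSlots p r (Qtarget p r x m) : Set ℕ) m₀ :=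
    fun hm => by rwa [activeSlots_Qtarget hp hr hm]
  rw [homotopy_Qmono, sum_eq_single_of_mem m₀ hm₀ fun m hm hne => ?_]
  · have hbelow : {m' ∈ x.t | m' < m₀} = (Qtarget p r x m₀).t := by
      ext m'
      simp only [mem_filter, Qtarget_t, mem_erase]
      exact ⟨fun h => ⟨h.2.ne, h.1⟩,
        fun h => ⟨h.2, lt_of_le_of_ne (hg.2 (t_subset_activeSlots x h.2)) h.1⟩⟩
    rw [homotopyMono_of_isGreatest (hg' hm₀), if_neg (by simp [Qtarget_t]),
      Qsource_Qtarget hr hm₀, hbelow, smul_smul, neg_one_pow_mul_self, one_smul]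
  · rw [homotopyMono_of_isGreatest (hg' hm), Qtarget_t, if_pos (mem_erase.2 ⟨hne.symm, hm₀⟩),
      smul_zero]

theorem Qmono_Qsource (hr : r ≤ n) {x : Mono n} {m₀ : ℕ} (hm₀ : n + 1 ≤ m₀) (hm₀t : m₀ ∉ x.t)
    (hN : p ^ r ≤ x.e (m₀ - r)) (hlt : ∀ m ∈ x.t, m < m₀) :
    Qmono p r (Qsource p r x m₀ hm₀) = (-1 : ZMod p) ^ #x.t • single x 1 +
      ∑ m ∈ x.t, (-1 : ZMod p) ^ #{m' ∈ x.t | m' < m} •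
        single (Qtarget p r (Qsource p r x m₀ hm₀) m) 1 := by
  have hbelow : ∀ m ∈ x.t, {m' ∈ insert m₀ x.t | m' < m} = {m' ∈ x.t | m' < m} := fun m hm => by
    rw [filter_insert, if_neg (hlt m hm).not_gt]
  rw [Qmono, show (Qsource p r x m₀ hm₀).t = insert m₀ x.t from rfl, sum_insert hm₀t,
    filter_insert, if_neg (lt_irrefl m₀), filter_true_of_mem hlt, Qtarget_Qsource hr hm₀ hm₀t hN,
    sum_congr rfl fun m hm => by rw [hbelow m hm]]

/-- The terms of `Q_r h x` other than `x` cancel against `h Q_r x`: trading at `m₀` commutes with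
lowering any `τ̄_m`, `m < m₀`. -/
theorem Qop_homotopyMono_add_of_isGreatest_of_not_mem (hp : 0 < p) (hr : r ≤ n) {x : Mono n}
    {m₀ : ℕ} (hg : IsGreatest (activeSlots p r x : Set ℕ) m₀) (hm₀ : m₀ ∉ x.t) :
    Qop p n r (homotopyMono p r x) + homotopy p n r (Qmono p r x) = single x 1 := by
  have hm₀n := le_of_mem_activeSlots hg.1
  have hN : p ^ r ≤ x.e (m₀ - r) := ((mem_activeSlots hp).1 hg.1).resolve_left hm₀ |>.2
  have hlt : ∀ m ∈ x.t, m < m₀ := fun m hm =>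
    lt_of_le_of_ne (hg.2 (t_subset_activeSlots x hm)) fun h => hm₀ (h ▸ hm)
  have hterm : ∀ m ∈ x.t, homotopyMono p r (Qtarget p r x m) =
      (-1 : ZMod p) ^ #(x.t.erase m) • single (Qtarget p r (Qsource p r x m₀ hm₀n) m) 1 :=
    fun m hm => by
      rw [homotopyMono_of_isGreatest (by rwa [activeSlots_Qtarget hp hr hm]), Qtarget_t,
        if_neg fun h => hm₀ (mem_of_mem_erase h), Qtarget_Qsource_comm hr hm₀n hm (hlt m hm).ne]
  have hQx : homotopy p n r (Qmono p r x) = ∑ m ∈ x.t, (-1 : ZMod p) ^ #{m' ∈ x.t | m' < m} •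
      (-1 : ZMod p) ^ #(x.t.erase m) • single (Qtarget p r (Qsource p r x m₀ hm₀n) m) 1 := by
    rw [homotopy_Qmono]
    exact sum_congr rfl fun m hm => by rw [hterm m hm]
  rw [homotopyMono_of_isGreatest hg, if_neg hm₀, map_smul, Qop_single, one_smul,
    Qmono_Qsource hr hm₀n hm₀ hN hlt, hQx, smul_add, smul_smul, neg_one_pow_mul_self, one_smul,
    add_assoc, smul_sum, ← sum_add_distrib, sum_eq_zero, add_zero]
  intro m hm
  have hsign : (-1 : ZMod p) ^ #x.t = -(-1) ^ #(x.t.erase m) := by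
    rw [← card_erase_add_one hm, pow_succ, mul_neg_one]
  rw [hsign, neg_smul, smul_comm, neg_add_cancel]

theorem Qop_homotopyMono_add_homotopy_Qmono (hp : 0 < p) (hr : r ≤ n) (x : Mono n) :
    Qop p n r (homotopyMono p r x) + homotopy p n r (Qmono p r x) =
      single x 1 - reducedPart p n r (single x 1) := by
  rw [reducedPart, Finsupp.linearCombination_single, one_smul]
  by_cases h : activeSlots p r x = ∅
  · have ht : x.t = ∅ := ((activeSlots_eq_empty_iff hp).1 h).1
    rw [if_pos h, sub_self, homotopyMono, dif_neg (by simp [h]), Qmono, ht, sum_empty, map_zero,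
      map_zero, add_zero]
  · have hne := nonempty_iff_ne_empty.2 h
    have hg := isGreatest_max' _ hne
    rw [if_neg h, sub_zero]
    by_cases hm : (activeSlots p r x).max' hne ∈ x.t
    · rw [homotopyMono_of_isGreatest hg, if_pos hm, map_zero, zero_add,
        homotopy_Qmono_of_isGreatest_of_mem hp hr hg hm]
    · exact Qop_homotopyMono_add_of_isGreatest_of_not_mem hp hr hg hm

theorem Qop_comp_homotopy_add_homotopy_comp_Qop (hp : 0 < p) (hr : r ≤ n) :
    Qop p n r ∘ₗ homotopy p n r + homotopy p n r ∘ₗ Qop p n r =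
      LinearMap.id - reducedPart p n r := by
  refine Finsupp.lhom_ext' fun x => LinearMap.ext_ring ?_
  simpa [homotopy, Qop_single] using Qop_homotopyMono_add_homotopy_Qmono hp hr x

end Homotopy

theorem inf_ker_le_span_sup_map_of_homotopy {R M : Type*} [Ring R] [AddCommGroup M] [Module R M]
    {d h π : M →ₗ[R] M} (hom : d ∘ₗ h + h ∘ₗ d = LinearMap.id - π) {W : Submodule R M}
    (hW : W ≤ W.comap h) {z : M} (hπ : W ≤ (Submodule.span R {z}).comap π) :
    W ⊓ LinearMap.ker d ≤ Submodule.span R {z} ⊔ W.map d := by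
  rintro v ⟨hvW, hvd⟩
  have hv : v = π v + d (h v) := by
    have := LinearMap.congr_fun hom v
    simp only [LinearMap.add_apply, LinearMap.comp_apply, LinearMap.mem_ker.1 hvd, map_zero,
      add_zero, LinearMap.sub_apply, LinearMap.id_apply] at this
    rw [this, add_sub_cancel]
  rw [hv]
  exact add_mem (Submodule.mem_sup_left (hπ hvW))
    (Submodule.mem_sup_right (Submodule.mem_map_of_mem (hW hvW)))

section MonomialSpan

variable {P : Mono n → Prop}

theorem single_mem_monSpan {x : Mono n} (hx : P x) : single x (1 : ZMod p) ∈ monSpan p n P :=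
  Submodule.subset_span ⟨x, hx, rfl⟩

theorem monSpan_le_iff {M : Submodule (ZMod p) (B p n)} :
    monSpan p n P ≤ M ↔ ∀ x, P x → single x 1 ∈ M := by
  rw [monSpan, Submodule.span_le, Set.image_subset_iff]
  rfl

theorem monSpan_le_comap_Qop (hP : ∀ x, P x → ∀ m ∈ x.t, P (Qtarget p r x m)) :
    monSpan p n P ≤ (monSpan p n P).comap (Qop p n r) :=
  monSpan_le_iff.2 fun x hx => by
    rw [Submodule.mem_comap, Qop_single, one_smul, Qmono]
    exact sum_mem fun m hm => Submodule.smul_mem _ _ (single_mem_monSpan (hP x hx m hm))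

theorem monSpan_le_comap_homotopy (hp : 0 < p)
    (hP : ∀ x m (hm : n + 1 ≤ m), m ∉ x.t → p ^ r ≤ x.e (m - r) → P x → P (Qsource p r x m hm)) :
    monSpan p n P ≤ (monSpan p n P).comap (homotopy p n r) :=
  monSpan_le_iff.2 fun x hx => by
    rw [Submodule.mem_comap, homotopy, Finsupp.linearCombination_single, one_smul, homotopyMono]
    split_ifs with hne hm
    · exact zero_mem _
    · have hN := ((mem_activeSlots hp).1 (max'_mem _ hne)).resolve_left hm |>.2
      exact Submodule.smul_mem _ _ (single_mem_monSpan (hP _ _ _ hm hN hx))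
    · exact zero_mem _

theorem monSpan_le_comap_reducedPart {z : Mono n} (hz : ∀ x, P x → activeSlots p r x = ∅ → x = z) :
    monSpan p n P ≤ (Submodule.span (ZMod p) {single z 1}).comap (reducedPart p n r) :=
  monSpan_le_iff.2 fun x hx => by
    rw [Submodule.mem_comap, reducedPart, Finsupp.linearCombination_single, one_smul]
    split_ifs with h
    · rw [hz x hx h]
      exact Submodule.mem_span_singleton_self _
    · exact zero_mem _

end MonomialSpan

theorem Qop_single_of_activeSlots_eq_empty (hp : 0 < p) {z : Mono n} (hz : activeSlots p r z = ∅) :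
    Qop p n r (single z 1) = 0 := by
  rw [Qop_single, Qmono, ((activeSlots_eq_empty_iff hp).1 hz).1, sum_empty, smul_zero]

/-- Every `Qtarget p r x m` has the active slot `m`. -/
theorem single_notMem_range_Qop (hp : 1 < p) (hr : r ≤ n) {z : Mono n}
    (hz : activeSlots p r z = ∅) : single z (1 : ZMod p) ∉ LinearMap.range (Qop p n r) := by
  have : Fact (1 < p) := ⟨hp⟩
  have hne : ∀ x, ∀ m ∈ x.t, Qtarget p r x m ≠ z := fun x m hm h => by
    have := t_subset_activeSlots (p := p) (r := r) x hm
    rw [← activeSlots_Qtarget (by omega) hr hm, h, hz] at this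
    exact notMem_empty m this
  have hcoeff : Finsupp.lapply z ∘ₗ Qop p n r = 0 := by
    refine Finsupp.lhom_ext fun x c => ?_
    simp only [LinearMap.comp_apply, Qop_single, Qmono, Finsupp.lapply_apply, Finsupp.smul_apply,
      Finsupp.finsetSum_apply, LinearMap.zero_apply]
    rw [sum_eq_zero fun m hm => by simp [hne x m hm], smul_zero]
  rintro ⟨v, hv⟩
  simpa [hv] using LinearMap.congr_fun hcoeff v

theorem homology_monSpan (hp : 1 < p) (hr : r ≤ n) {P : Mono n → Prop}
    (hS : ∀ x m (hm : n + 1 ≤ m), m ∉ x.t → p ^ r ≤ x.e (m - r) → P x → P (Qsource p r x m hm))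
    {z : Mono n} (hz : P z) (hz₀ : activeSlots p r z = ∅)
    (huniq : ∀ x, P x → activeSlots p r x = ∅ → x = z) :
    let c : B p n := single z 1
    c ∈ monSpan p n P ∧ Qop p n r c = 0 ∧ c ∉ Submodule.map (Qop p n r) (monSpan p n P) ∧
      monSpan p n P ⊓ LinearMap.ker (Qop p n r) ≤
        Submodule.span (ZMod p) {c} ⊔ Submodule.map (Qop p n r) (monSpan p n P) :=
  ⟨single_mem_monSpan hz, Qop_single_of_activeSlots_eq_empty (by omega) hz₀,
    fun h => single_notMem_range_Qop hp hr hz₀ (LinearMap.map_le_range h),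
    inf_ker_le_span_sup_map_of_homotopy (Qop_comp_homotopy_add_homotopy_comp_Qop (by omega) hr)
      (monSpan_le_comap_homotopy (by omega) hS) (monSpan_le_comap_reducedPart huniq)⟩

section Weight

theorem wt_eq (x : Mono n) : x.wt p = linearCombination ℕ (p ^ ·) x.e + ∑ m ∈ x.t, p ^ m := rfl

theorem wt_Qtarget (hr : r ≤ n) {x : Mono n} {m : ℕ} (hm : m ∈ x.t) :
    (Qtarget p r x m).wt p = x.wt p := by
  have := x.ht m hm
  have hpow : p ^ r * p ^ (m - r) = p ^ m := by rw [← pow_add, Nat.add_sub_cancel' (by omega)]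
  have hsum := sum_erase_add x.t (p ^ ·) hm
  rw [wt_eq, wt_eq, Qtarget_e (by omega), map_add, Finsupp.linearCombination_single, smul_eq_mul,
    hpow, Qtarget_t]
  omega

theorem wt_Qsource (hr : r ≤ n) {x : Mono n} {m : ℕ} (hm : n + 1 ≤ m) (hmt : m ∉ x.t)
    (hN : p ^ r ≤ x.e (m - r)) : (Qsource p r x m hm).wt p = x.wt p := by
  conv_rhs => rw [← Qtarget_Qsource hr hm hmt hN]
  exact (wt_Qtarget hr (mem_insert_self m x.t)).symm

theorem Qtarget_e_apply_of_ne {j m : ℕ} (hm : r < m) (hj : j ≠ m - r) (x : Mono n) :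
    (Qtarget p r x m).e j = x.e j := by
  simp [Qtarget_e hm, hj.symm]

theorem Qsource_e_apply_of_ne {j m : ℕ} (hj : j ≠ m - r) (x : Mono n) (hm : n + 1 ≤ m) :
    (Qsource p r x m hm).e j = x.e j := by
  simp [Qsource, hj.symm]

end Weight

section W2

def IsW2Mono (p k : ℕ) (x : Mono 2) : Prop := x.e 1 = 0 ∧ x.wt p = p ^ 2 * k

variable {k : ℕ} {x : Mono 2}

theorem IsW2Mono.Qtarget (hr : r ≤ 1) (hx : IsW2Mono p k x) {m : ℕ} (hm : m ∈ x.t) :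
    IsW2Mono p k (Qtarget p r x m) := by
  have := x.ht m hm
  exact ⟨(Qtarget_e_apply_of_ne (by omega) (by omega) x).trans hx.1,
    (wt_Qtarget (by omega) hm).trans hx.2⟩

theorem IsW2Mono.Qsource (hr : r ≤ 1) (hx : IsW2Mono p k x) {m : ℕ} (hm : 2 + 1 ≤ m)
    (hmt : m ∉ x.t) (hN : p ^ r ≤ x.e (m - r)) : IsW2Mono p k (Qsource p r x m hm) :=
  ⟨(Qsource_e_apply_of_ne (by omega) x hm).trans hx.1, (wt_Qsource (by omega) hm hmt hN).trans hx.2⟩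

theorem isW2Mono_zeta2pow : IsW2Mono p k (zeta2pow k) := by
  refine ⟨by simp [zeta2pow], ?_⟩
  rw [wt_eq]
  simp [zeta2pow, mul_comm]

theorem activeSlots_zeta2pow (hp : 0 < p) : activeSlots p 0 (zeta2pow k) = ∅ :=
  (activeSlots_eq_empty_iff hp).2
    ⟨rfl, fun m hm => by simp [zeta2pow, show 2 ≠ m by omega]⟩

theorem IsW2Mono.eq_zeta2pow (hp : 0 < p) (hx : IsW2Mono p k x) (h : activeSlots p 0 x = ∅) :
    x = zeta2pow k := by
  obtain ⟨ht, hlt⟩ := (activeSlots_eq_empty_iff hp).1 h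
  have he : x.e = single 2 (x.e 2) := by
    ext j
    rcases j with _ | _ | _ | j
    · simp [x.he]
    · simp [hx.1]
    · simp
    · simpa [Finsupp.single_apply] using hlt (j + 3) (by omega)
  have hk : x.e 2 = k := by
    have hwt := hx.2
    rw [wt_eq, ht, sum_empty, add_zero, he, Finsupp.linearCombination_single, smul_eq_mul,
      mul_comm] at hwt
    exact Nat.eq_of_mul_eq_mul_left (by positivity) hwt
  exact Mono.ext (he.trans (by rw [hk]; rfl)) ht

variable {e' : ℕ →₀ ℕ} (h0 : e' 0 = 0) (h1 : e' 1 = 0) (hdigits : ∀ j, e' (j + 2) = k / p ^ j % p)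
include h0 h1 hdigits

theorem linearCombination_digits (hp : 1 < p) : linearCombination ℕ (p ^ ·) e' = p ^ 2 * k := by
  have hL : ∀ i, k + 2 ≤ i → e' i = 0 := fun i hi => by
    obtain ⟨j, rfl⟩ : ∃ j, i = j + 2 := ⟨i - 2, by omega⟩
    rw [hdigits, Nat.div_eq_of_lt ((Nat.lt_pow_self hp).trans_le
      (Nat.pow_le_pow_right (by omega) (by omega))), Nat.zero_mod]
  rw [linearCombination_pow_eq_sum_range hL, sum_range_succ', sum_range_succ', h0, h1, zero_mul,
    zero_mul, add_zero, add_zero]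
  calc ∑ i ∈ range k, e' (i + 1 + 1) * p ^ (i + 1 + 1)
      = p ^ 2 * ∑ i ∈ range k, k / p ^ i % p * p ^ i := by
        rw [mul_sum]
        exact sum_congr rfl fun i _ => by rw [hdigits]; ring
    _ = p ^ 2 * k := by rw [sum_range_div_pow_mod_mul_pow, Nat.mod_eq_of_lt (Nat.lt_pow_self hp)]

theorem exp_lt_of_digits (hp : 0 < p) : ∀ j, e' j < p
  | 0 => by rw [h0]; exact hp
  | 1 => by rw [h1]; exact hp
  | j + 2 => by rw [hdigits]; exact Nat.mod_lt _ hp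

theorem isW2Mono_ofExp (hp : 1 < p) : IsW2Mono p k (Mono.ofExp e' h0) :=
  ⟨h1, by rw [wt_eq]; simpa [Mono.ofExp] using linearCombination_digits h0 h1 hdigits hp⟩

theorem activeSlots_ofExp (hp : 0 < p) : activeSlots p 1 (Mono.ofExp (n := 2) e' h0) = ∅ :=
  (activeSlots_eq_empty_iff hp).2 ⟨rfl, fun m hm => by
    obtain ⟨j, rfl⟩ : ∃ j, m = j + 3 := ⟨m - 3, by omega⟩
    simpa [Mono.ofExp] using exp_lt_of_digits h0 h1 hdigits hp (j + 2)⟩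

theorem IsW2Mono.eq_ofExp (hp : 1 < p) (hx : IsW2Mono p k x) (h : activeSlots p 1 x = ∅) :
    x = Mono.ofExp e' h0 := by
  obtain ⟨ht, hlt⟩ := (activeSlots_eq_empty_iff (by omega)).1 h
  have hx_lt : ∀ j, x.e j < p
    | 0 => by rw [x.he]; omega
    | 1 => by rw [hx.1]; omega
    | j + 2 => by simpa using hlt (j + 3) (by omega)
  refine Mono.ext (eq_of_linearCombination_pow_eq hx_lt
    (exp_lt_of_digits h0 h1 hdigits (by omega)) ?_) ht
  have hwt := hx.2
  rwa [wt_eq, ht, sum_empty, add_zero, ← linearCombination_digits h0 h1 hdigits hp] at hwt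

end W2

end Margolis

theorem margolis_homology_of_W2k_general (p : ℕ) (hp : p.Prime) (k : ℕ)
    (e' : ℕ →₀ ℕ) (h0 : e' 0 = 0) (h1 : e' 1 = 0)
    (hdigits : ∀ j, e' (j + 2) = (k / p ^ j) % p) :
    (∀ r ≤ 1, ∀ x ∈ Wsub p k, Qop p 2 r x ∈ Wsub p k) ∧
    (let z : B p 2 := Finsupp.single (zeta2pow k) 1;
      z ∈ Wsub p k ∧ Qop p 2 0 z = 0 ∧
      z ∉ Submodule.map (Qop p 2 0) (Wsub p k) ∧
      Wsub p k ⊓ LinearMap.ker (Qop p 2 0) ≤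
        Submodule.span (ZMod p) {z} ⊔ Submodule.map (Qop p 2 0) (Wsub p k)) ∧
    (let z' : B p 2 := Finsupp.single
        (⟨e', ∅, h0, fun m hm => absurd hm (Finset.notMem_empty m)⟩ : Mono 2) 1;
      z' ∈ Wsub p k ∧ Qop p 2 1 z' = 0 ∧
      z' ∉ Submodule.map (Qop p 2 1) (Wsub p k) ∧
      Wsub p k ⊓ LinearMap.ker (Qop p 2 1) ≤
        Submodule.span (ZMod p) {z'} ⊔ Submodule.map (Qop p 2 1) (Wsub p k)) := by
  have hp₀ := hp.pos
  refine ⟨fun r hr x hx => ?_, ?_, ?_⟩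
  · exact Margolis.monSpan_le_comap_Qop (P := Margolis.IsW2Mono p k)
      (fun x hx m hm => hx.Qtarget hr hm) hx
  · exact Margolis.homology_monSpan (P := Margolis.IsW2Mono p k) hp.one_lt zero_le_two
      (fun x m hm hmt hN hx => hx.Qsource zero_le_one hm hmt hN) Margolis.isW2Mono_zeta2pow
      (Margolis.activeSlots_zeta2pow hp₀) fun x hx h => hx.eq_zeta2pow hp₀ h
  · exact Margolis.homology_monSpan (P := Margolis.IsW2Mono p k) hp.one_lt one_le_two
      (fun x m hm hmt hN hx => hx.Qsource le_rfl hm hmt hN)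
      (Margolis.isW2Mono_ofExp h0 h1 hdigits hp.one_lt)
      (Margolis.activeSlots_ofExp h0 h1 hdigits hp₀)
      fun x hx h => hx.eq_ofExp h0 h1 hdigits hp.one_lt h

/-- `W₂(k)` is stable under `Q₀` and `Q₁`, and its `Q₀`- and
`Q₁`-Margolis homology groups are one-dimensional: `M(W₂(k); Q₀)` is spanned by the class
of `ζ₂^k`, and `M(W₂(k); Q₁)` is spanned by the class of `ζ₂^{a₀} ζ₃^{a₁} ζ₄^{a₂} ⋯`,
where `k = a₀ + a₁ p + a₂ p² + ⋯` is the base-`p` expansion of `k`. -/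
theorem margolis_homology_of_W2k (p : ℕ) (hp : p.Prime) (hodd : Odd p) (k : ℕ)
    (e' : ℕ →₀ ℕ) (h0 : e' 0 = 0) (h1 : e' 1 = 0)
    (hdigits : ∀ j, e' (j + 2) = (k / p ^ j) % p) :
    (∀ r ≤ 1, ∀ x ∈ Wsub p k, Qop p 2 r x ∈ Wsub p k) ∧
    (let z : B p 2 := Finsupp.single (zeta2pow k) 1;
      z ∈ Wsub p k ∧ Qop p 2 0 z = 0 ∧
      z ∉ Submodule.map (Qop p 2 0) (Wsub p k) ∧
      Wsub p k ⊓ LinearMap.ker (Qop p 2 0) ≤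
        Submodule.span (ZMod p) {z} ⊔ Submodule.map (Qop p 2 0) (Wsub p k)) ∧
    (let z' : B p 2 := Finsupp.single
        (⟨e', ∅, h0, fun m hm => absurd hm (Finset.notMem_empty m)⟩ : Mono 2) 1;
      z' ∈ Wsub p k ∧ Qop p 2 1 z' = 0 ∧
      z' ∉ Submodule.map (Qop p 2 1) (Wsub p k) ∧
      Wsub p k ⊓ LinearMap.ker (Qop p 2 1) ≤
        Submodule.span (ZMod p) {z'} ⊔ Submodule.map (Qop p 2 1) (Wsub p k)) :=
  margolis_homology_of_W2k_general p hp k e' h0 h1 hdigits
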